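/- One-step elimination of a remove operation (correctness of manageOperation in the increasing refactoring): suppose L = L₁ ++ [(c₁, e, none)] ++ L₂, where (c₁, e, none) is a remove on reference e. Let L₁' be obtained from L₁ by replacing every operation (c, e, o) whose reference is e by (fun q => c q ∧ ¬ c₁ q, e, o), leaving operations on other references unchanged. Then for every base program B and every product p: variant B L p = variant (Function.update B e none) (((fun q => ¬ c₁ q), e, B e) :: (L₁' ++ L₂)) p. -/

import Mathlib

/-!
Evaluated at a single reference `k`, a variant is a fold over `Option β` in which only the
active operations on `k` take effect. At `k ≠ e` neither the remove, nor the new leading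
operation, nor the masking of conditions changes anything. At `e`: if `c₁ p` holds, the remove
yields `none`, and on the right every operation on `e` is switched off, so `none` survives;
otherwise the remove is inert, the masked conditions agree with the original ones at `p`, and
the leading operation restores `B e` on top of `Function.update B e none`.
-/

open Classical in
/-- The variant generated for product `p` from base program `B` and list `L` of
conditional delta operations. -/
noncomputable def variant {α β ρ : Type*} (B : α → Option β)
    (L : List ((ρ → Prop) × α × Option β)) (p : ρ) : α → Option β :=
  L.foldl (fun P op => if op.1 p then Function.update P op.2.1 op.2.2 else P) B

namespace DeltaOp

open Classical

variable {α β ρ : Type*}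

noncomputable def valueAt (p : ρ) (k : α) (v : Option β) (op : (ρ → Prop) × α × Option β) :
    Option β :=
  if op.1 p ∧ op.2.1 = k then op.2.2 else v

noncomputable def mask (c₁ : ρ → Prop) (e : α) (op : (ρ → Prop) × α × Option β) :
    (ρ → Prop) × α × Option β :=
  if op.2.1 = e then ((fun q => op.1 q ∧ ¬ c₁ q), e, op.2.2) else op

theorem variant_apply (B : α → Option β) (L : List ((ρ → Prop) × α × Option β)) (p : ρ)
    (k : α) : variant B L p k = L.foldl (valueAt p k) (B k) := by
  refine (List.foldl_hom (fun P : α → Option β => P k) fun P op => ?_).symm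
  by_cases hop : op.1 p <;> simp [valueAt, Function.update_apply, hop, eq_comm]

theorem valueAt_mask (c₁ : ρ → Prop) (e : α) (p : ρ) (k : α) (v : Option β)
    (op : (ρ → Prop) × α × Option β) :
    valueAt p k v (mask c₁ e op) = if c₁ p ∧ e = k then v else valueAt p k v op := by
  obtain ⟨c, r, o⟩ := op
  by_cases hr : r = e
  · subst hr
    by_cases hc : c₁ p <;> by_cases hk : r = k <;> simp [valueAt, mask, hc, hk]
  · by_cases hk : e = k
    · subst hk
      simp [valueAt, mask, hr]
    · simp [valueAt, mask, hr, hk]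

theorem foldl_valueAt_map_mask (c₁ : ρ → Prop) (e : α) (p : ρ) (k : α) (v : Option β)
    (L : List ((ρ → Prop) × α × Option β)) :
    (L.map (mask c₁ e)).foldl (valueAt p k) v =
      if c₁ p ∧ e = k then v else L.foldl (valueAt p k) v := by
  rw [List.foldl_map]
  simp_rw [valueAt_mask]
  split_ifs
  · exact List.foldl_fixed L
  · rfl

end DeltaOp

open DeltaOp

open Classical in
/-- One-step elimination of a remove operation (correctness of `manageOperation`
in the increasing refactoring). -/
theorem remove_elimination {α β ρ : Type*} (B : α → Option β)
    (L₁ L₂ : List ((ρ → Prop) × α × Option β)) (c₁ : ρ → Prop) (e : α) (p : ρ) :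
    variant B (L₁ ++ [(c₁, e, (none : Option β))] ++ L₂) p =
      variant (Function.update B e none)
        (((fun q => ¬ c₁ q), e, B e) ::
          ((L₁.map (fun op =>
              if op.2.1 = e then ((fun q => op.1 q ∧ ¬ c₁ q), e, op.2.2) else op)) ++ L₂)) p := by
  funext k
  change _ = variant _ (_ :: (L₁.map (mask c₁ e) ++ L₂)) p k
  simp only [variant_apply, List.foldl_append, List.foldl_cons, foldl_valueAt_map_mask]
  congr 1
  by_cases hc : c₁ p <;> by_cases hk : e = k <;> simp [valueAt, hc, hk, eq_comm]
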